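/- For all integers k ≥ 1 and n ≥ 4, there exists a positive integer N such that every k-crossing system of paths of size at least N contains a regular subsystem of size n. -/

import Mathlib

noncomputable section

/-- A function `g` changes sign at `t`. -/
def SignChangeAt (g : ℝ → ℝ) (t : ℝ) : Prop :=
  ∃ ε > (0 : ℝ),
    ((∀ s ∈ Set.Ioo (t - ε) t, g s < 0) ∧ (∀ s ∈ Set.Ioo t (t + ε), 0 < g s)) ∨
    ((∀ s ∈ Set.Ioo (t - ε) t, 0 < g s) ∧ (∀ s ∈ Set.Ioo t (t + ε), g s < 0))

/-- A system of at least three paths (graphs of continuous functions on `[0,1]`):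
distinct endpoints, finite pairwise intersections, all of which are crossings,
and no triple intersection points. -/
structure PathSystem (m : ℕ) where
  f : Fin m → ℝ → ℝ
  size_ge : 3 ≤ m
  cont : ∀ i, ContinuousOn (f i) (Set.Icc 0 1)
  endpoints0 : ∀ i j : Fin m, i ≠ j → f i 0 ≠ f j 0
  endpoints1 : ∀ i j : Fin m, i ≠ j → f i 1 ≠ f j 1
  finite_meet : ∀ i j : Fin m, i ≠ j → {t : ℝ | t ∈ Set.Icc (0:ℝ) 1 ∧ f i t = f j t}.Finite
  crossing : ∀ i j : Fin m, i ≠ j → ∀ t ∈ Set.Icc (0:ℝ) 1, f i t = f j t →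
      SignChangeAt (fun s => f i s - f j s) t
  no_triple : ∀ i j k : Fin m, i ≠ j → i ≠ k → j ≠ k → ∀ t ∈ Set.Icc (0:ℝ) 1,
      ¬(f i t = f j t ∧ f i t = f k t)

/-- The set of parameters where paths `i` and `j` of the system meet (= cross). -/
def meetSet {m : ℕ} (S : PathSystem m) (i j : Fin m) : Set ℝ :=
  {t : ℝ | t ∈ Set.Icc (0:ℝ) 1 ∧ S.f i t = S.f j t}

/-- Each pair of paths crosses at least once and at most `k` times. -/
def KCrossing {m : ℕ} (S : PathSystem m) (k : ℕ) : Prop :=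
  ∀ i j : Fin m, i ≠ j → 1 ≤ (meetSet S i j).ncard ∧ (meetSet S i j).ncard ≤ k

/-- Path `i` appears on the upper envelope of the system. -/
def OnUpperEnv {m : ℕ} (S : PathSystem m) (i : Fin m) : Prop :=
  ∃ t ∈ Set.Icc (0:ℝ) 1, ∀ j : Fin m, j ≠ i → S.f j t < S.f i t

/-- Path `i` appears on the lower envelope of the system. -/
def OnLowerEnv {m : ℕ} (S : PathSystem m) (i : Fin m) : Prop :=
  ∃ t ∈ Set.Icc (0:ℝ) 1, ∀ j : Fin m, j ≠ i → S.f i t < S.f j t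

/-- The subsystem of `S` on the index set `s` is upper convex. -/
def UpperConvexOn {m : ℕ} (S : PathSystem m) (s : Finset (Fin m)) : Prop :=
  ∀ i ∈ s, ∃ t ∈ Set.Icc (0:ℝ) 1, ∀ j ∈ s, j ≠ i → S.f j t < S.f i t

/-- The subsystem of `S` on the index set `s` is lower convex. -/
def LowerConvexOn {m : ℕ} (S : PathSystem m) (s : Finset (Fin m)) : Prop :=
  ∀ i ∈ s, ∃ t ∈ Set.Icc (0:ℝ) 1, ∀ j ∈ s, j ≠ i → S.f i t < S.f j t

/-- The three-letter ordered alphabet `x ≺ y ≺ z` used for signatures. -/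
inductive XYZ : Type
  | x | y | z
deriving DecidableEq

/-- The signature of the size-3 subsystem on paths `i, j, k`, where the labels are
ordered by the values at `0` (bottom to top): the word on `{x,y,z}` listing the
crossings from left to right, `x` for an `{i,j}`-crossing, `y` for an `{i,k}`-crossing
and `z` for a `{j,k}`-crossing. -/
noncomputable def signature3 {m : ℕ} (S : PathSystem m) (i j k : Fin m)
    (h1 : S.f i 0 < S.f j 0) (h2 : S.f j 0 < S.f k 0) : List XYZ :=
  (Finset.sort
      (((S.finite_meet i j (by intro h; subst h; exact lt_irrefl _ h1)).toFinset ∪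
        (S.finite_meet i k (by intro h; subst h; exact lt_irrefl _ (h1.trans h2))).toFinset) ∪
        (S.finite_meet j k (by intro h; subst h; exact lt_irrefl _ h2)).toFinset) (· ≤ ·)).map
    (fun t => if S.f i t = S.f j t then XYZ.x else if S.f i t = S.f k t then XYZ.y else XYZ.z)

/-- `σ` is the common (nonempty) signature of all size-3 subsystems of `S`. -/
def RegularSig {m : ℕ} (S : PathSystem m) (σ : List XYZ) : Prop :=
  σ ≠ [] ∧ ∀ (i j k : Fin m) (h1 : S.f i 0 < S.f j 0) (h2 : S.f j 0 < S.f k 0),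
    signature3 S i j k h1 h2 = σ

/-- A regular system: size at least 4, and all size-3 subsystems have the same
nonempty signature. -/
def IsRegularSystem {m : ℕ} (S : PathSystem m) : Prop :=
  4 ≤ m ∧ ∃ σ : List XYZ, RegularSig S σ

/-- A system labeled by `[m]`: indices increase with the order of the left endpoints. -/
structure LabeledPathSystem (m : ℕ) extends PathSystem m where
  mono0 : ∀ i j : Fin m, i < j → f i 0 < f j 0

/-- Signature of the size-3 subsystem on `i < j < k` of a labeled system. -/
noncomputable def lsig {m : ℕ} (S : LabeledPathSystem m) (i j k : Fin m)
    (h1 : i < j) (h2 : j < k) : List XYZ :=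
  signature3 S.toPathSystem i j k (S.mono0 i j h1) (S.mono0 j k h2)

/-- `σ` is the common nonempty signature of all size-3 subsystems of the labeled
system `S`. -/
def SystemSignatureL {m : ℕ} (S : LabeledPathSystem m) (σ : List XYZ) : Prop :=
  σ ≠ [] ∧ ∀ (i j k : Fin m) (h1 : i < j) (h2 : j < k), lsig S i j k h1 h2 = σ

/-- The signature of a labeled system of three paths. -/
noncomputable def sig3 (S : LabeledPathSystem 3) : List XYZ :=
  lsig S 0 1 2 (by decide) (by decide)

/-- The set of parameters where path `i` meets some other path. -/
def crossTimes {m : ℕ} (S : PathSystem m) (i : Fin m) : Set ℝ :=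
  {t : ℝ | t ∈ Set.Icc (0:ℝ) 1 ∧ ∃ j : Fin m, j ≠ i ∧ S.f j t = S.f i t}

lemma crossTimes_finite {m : ℕ} (S : PathSystem m) (i : Fin m) :
    (crossTimes S i).Finite := by
  have hsub : crossTimes S i ⊆
      ⋃ j : Fin m, {t : ℝ | (t ∈ Set.Icc (0:ℝ) 1 ∧ S.f j t = S.f i t) ∧ j ≠ i} := by
    rintro t ⟨ht, j, hj, he⟩
    exact Set.mem_iUnion.2 ⟨j, ⟨ht, he⟩, hj⟩
  refine Set.Finite.subset (Set.finite_iUnion fun j => ?_) hsub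
  by_cases hj : j = i
  · subst hj
    have h0 : {t : ℝ | (t ∈ Set.Icc (0:ℝ) 1 ∧ S.f j t = S.f j t) ∧ j ≠ j} = ∅ := by
      ext t; simp
    rw [h0]; exact Set.finite_empty
  · exact (S.finite_meet j i hj).subset fun t ht => ht.1

/-- The local sequence of path `i`: the labels of the other paths in the order in
which path `i` meets them from left to right. -/
noncomputable def localSeq {m : ℕ} (S : PathSystem m) (i : Fin m) : List (Fin m) :=
  (Finset.sort (crossTimes_finite S i).toFinset (· ≤ ·)).map fun t =>
    if h : ∃ j : Fin m, j ≠ i ∧ S.f j t = S.f i t then h.choose else i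

/-- The tableau associated to a labeled system: row `r` (for `1 ≤ r ≤ m`) is the
local sequence of path `r` written with the (1-based) labels. -/
noncomputable def assocTab {m : ℕ} (S : LabeledPathSystem m) : ℕ → List ℕ :=
  fun r => if h : 1 ≤ r ∧ r ≤ m then
      (localSeq S.toPathSystem ⟨r - 1, by omega⟩).map (fun j => (j : ℕ) + 1)
    else []

/-- A nonempty word on `{x,y,z}` is irreducible if no nonempty proper prefix contains
equally many `x`'s, `y`'s and `z`'s. -/
def IrreducibleXYZ (σ : List XYZ) : Prop :=
  σ ≠ [] ∧ ∀ p : ℕ, 0 < p → p < σ.length →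
    ¬((σ.take p).count XYZ.x = (σ.take p).count XYZ.y ∧
      (σ.take p).count XYZ.y = (σ.take p).count XYZ.z)

/-!
Colour every triple of paths, listed by increasing left endpoint, by its signature. In a
`k`-crossing system each pair of paths crosses between once and `k` times, so a signature is a
nonempty word of length at most `3k`: finitely many colours. Ramsey's theorem for triples then
gives `n` paths all of whose triples have the same signature.

Ramsey's theorem for `r`-sets is proved by the Erdős–Rado argument: repeatedly removing the
minimum `a` of the remaining set and keeping a large homogeneous set for the link colouring
`B ↦ χ (insert a B)` (the case `r`) produces an end-homogeneous set, on which the colour of an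
`(r + 1)`-set depends only on its minimum; pigeonholing that colour finishes the induction.
-/

section Ramsey

variable {α β : Type*}

/-- With `c` colours, `(fun M => ramseyBound c r M + 1)^[M] 0` points contain an end-homogeneous
set of size `M` for `(r + 1)`-sets, and by pigeonhole `c * n + 1` end-homogeneous points contain
`n` that are homogeneous. -/
def ramseyBound (c : ℕ) : ℕ → ℕ → ℕ
  | 0, n => n
  | r + 1, n => (fun M => ramseyBound c r M + 1)^[c * n + 1] 0

lemma exists_subset_card_eq_forall_eq {C : Finset β} {t : Finset α} {d : α → β} (n : ℕ)
    (hd : ∀ x ∈ t, d x ∈ C) (ht : C.card * n < t.card) :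
    ∃ u ⊆ t, u.card = n ∧ ∃ b ∈ C, ∀ x ∈ u, d x = b := by
  classical
  obtain ⟨b, hbC, hb⟩ := Finset.exists_lt_card_fiber_of_mul_lt_card_of_maps_to hd ht
  obtain ⟨u, hu, rfl⟩ := Finset.exists_subset_card_eq hb.le
  exact ⟨u, hu.trans (Finset.filter_subset _ _), rfl, b, hbC,
    fun x hx => (Finset.mem_filter.1 (hu hx)).2⟩

variable (α) in
def IsRamseyBound (C : Finset β) (r : ℕ) (R : ℕ → ℕ) : Prop :=
  ∀ (n : ℕ) (χ : Finset α → β) (s : Finset α), (∀ A ⊆ s, A.card = r → χ A ∈ C) →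
    R n ≤ s.card → ∃ t ⊆ s, t.card = n ∧ ∃ b ∈ C, ∀ A ⊆ t, A.card = r → χ A = b

variable [LinearOrder α]

theorem exists_endHomogeneous {C : Finset β} {r : ℕ} {R : ℕ → ℕ} (hR : IsRamseyBound α C r R)
    (χ : Finset α → β) (M : ℕ) (s : Finset α) (hχ : ∀ A ⊆ s, A.card = r + 1 → χ A ∈ C)
    (hs : (fun M => R M + 1)^[M] 0 ≤ s.card) :
    ∃ t ⊆ s, t.card = M ∧ ∃ d : α → β, (∀ x ∈ t, d x ∈ C) ∧
      ∀ x ∈ t, ∀ B ⊆ t, B.card = r → (∀ y ∈ B, x < y) → χ (insert x B) = d x := by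
  classical
  induction M generalizing s with
  | zero => exact ⟨∅, Finset.empty_subset _, rfl, fun _ => χ ∅, by simp, by simp⟩
  | succ M ih =>
    rw [Function.iterate_succ_apply'] at hs
    have hne : s.Nonempty := Finset.card_pos.1 (by omega)
    set a := s.min' hne
    have ha : a ∈ s := s.min'_mem hne
    obtain ⟨u, hus, hu, b, hbC, hub⟩ :=
      hR ((fun M => R M + 1)^[M] 0) (fun B => χ (insert a B)) (s.erase a)
        (fun A hA hAr => hχ _ (Finset.insert_subset ha (hA.trans (s.erase_subset a)))
          (by rw [Finset.card_insert_of_notMem fun h => by simpa using hA h, hAr]))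
        (by rw [Finset.card_erase_of_mem ha]; omega)
    obtain ⟨t, htu, rfl, d, hdC, hd⟩ :=
      ih u (fun A hA => hχ A (hA.trans (hus.trans (s.erase_subset a)))) hu.ge
    have hat : ∀ x ∈ t, a < x := fun x hx =>
      s.min'_lt_of_mem_erase_min' hne (hus (htu hx))
    have haB : ∀ x ∈ insert a t, ∀ B ⊆ insert a t, (∀ y ∈ B, x < y) → B ⊆ t := by
      intro x hx B hB hxB
      refine (Finset.subset_insert_iff_of_notMem fun haB => ?_).1 hB
      rcases Finset.mem_insert.1 hx with rfl | hx
      · exact lt_irrefl _ (hxB _ haB)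
      · exact lt_asymm (hat x hx) (hxB a haB)
    refine ⟨insert a t, Finset.insert_subset ha (htu.trans (hus.trans (s.erase_subset a))),
      Finset.card_insert_of_notMem fun h => lt_irrefl a (hat a h), Function.update d a b, ?_, ?_⟩
    · intro x hx
      rcases Finset.mem_insert.1 hx with rfl | hx
      · simpa using hbC
      · rw [Function.update_of_ne (hat x hx).ne']
        exact hdC x hx
    · intro x hx B hB hBr hxB
      have hBt := haB x hx B hB hxB
      rcases Finset.mem_insert.1 hx with rfl | hx
      · rw [Function.update_self]
        exact hub B (hBt.trans htu) hBr
      · rw [Function.update_of_ne (hat x hx).ne']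
        exact hd x hx B hBt hBr hxB

theorem isRamseyBound_ramseyBound (C : Finset β) (r : ℕ) :
    IsRamseyBound α C r (ramseyBound C.card r) := by
  classical
  intro n χ s hχ hs
  induction r generalizing n χ s with
  | zero =>
    obtain ⟨t, hts, htn⟩ := Finset.exists_subset_card_eq hs
    exact ⟨t, hts, htn, χ ∅, hχ ∅ (Finset.empty_subset _) rfl,
      fun A _ hA => by rw [Finset.card_eq_zero.1 hA]⟩
  | succ r ih =>
    obtain ⟨t, hts, htc, d, hdC, hd⟩ :=
      exists_endHomogeneous ih χ _ s hχ hs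
    obtain ⟨u, hut, hun, b, hbC, hub⟩ :=
      exists_subset_card_eq_forall_eq n hdC (by omega : C.card * n < t.card)
    refine ⟨u, hut.trans hts, hun, b, hbC, fun A hAu hA => ?_⟩
    have hne : A.Nonempty := Finset.card_pos.1 (by omega)
    have hmin : A.min' hne ∈ t := hut (hAu (A.min'_mem hne))
    have hA' := hd _ hmin (A.erase (A.min' hne)) ((A.erase_subset _).trans (hAu.trans hut))
      (by rw [Finset.card_erase_of_mem (A.min'_mem hne)]; omega)
      (fun y hy => A.min'_lt_of_mem_erase_min' hne hy)
    rw [Finset.insert_erase (A.min'_mem hne)] at hA'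
    rw [hA', hub _ (hAu (A.min'_mem hne))]

end Ramsey

section Triples

variable {α β : Type*} [LinearOrder α]

lemma Finset.card_eq_three_of_lt {x y z : α} (hxy : x < y) (hyz : y < z) :
    ({x, y, z} : Finset α).card = 3 :=
  Finset.card_eq_three.2 ⟨x, y, z, hxy.ne, (hxy.trans hyz).ne, hyz.ne, rfl⟩

lemma Finset.orderEmbOfFin_triple {x y z : α} (hxy : x < y) (hyz : y < z)
    (h : ({x, y, z} : Finset α).card = 3) :
    ⇑(({x, y, z} : Finset α).orderEmbOfFin h) = ![x, y, z] :=
  (Finset.orderEmbOfFin_unique h (by simp [Fin.forall_fin_succ])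
    (Fin.strictMono_iff_lt_succ.2 (by simp [Fin.forall_fin_succ, hxy, hyz]))).symm

theorem exists_homogeneous_triples_of_ramseyBound_le {C : Finset β} (n : ℕ)
    {χ : (x y z : α) → x < y → y < z → β} {s : Finset α}
    (hχ : ∀ x ∈ s, ∀ y ∈ s, ∀ z ∈ s, ∀ hxy hyz, χ x y z hxy hyz ∈ C)
    (hs : ramseyBound C.card 3 n ≤ s.card) :
    ∃ t ⊆ s, t.card = n ∧ ∃ b ∈ C, ∀ x ∈ t, ∀ y ∈ t, ∀ z ∈ t, ∀ hxy hyz, χ x y z hxy hyz = b := by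
  classical
  let χ' : Finset α → Option β := fun A =>
    if h : A.card = 3 then
      let v := A.orderEmbOfFin h
      some (χ (v 0) (v 1) (v 2) (v.strictMono (by decide)) (v.strictMono (by decide)))
    else none
  have hχ' : ∀ {x y z : α} (hxy : x < y) (hyz : y < z),
      χ' {x, y, z} = some (χ x y z hxy hyz) := by
    intro x y z hxy hyz
    have h := Finset.card_eq_three_of_lt hxy hyz
    simp only [χ', dif_pos h, Finset.orderEmbOfFin_triple hxy hyz h]
    rfl
  have hχ'C : ∀ A ⊆ s, A.card = 3 → χ' A ∈ C.map .some := by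
    intro A hA hA3
    have hv : ∀ i, A.orderEmbOfFin hA3 i ∈ s := fun i => hA (A.orderEmbOfFin_mem hA3 i)
    simp only [χ', dif_pos hA3]
    exact Finset.mem_map_of_mem _ (hχ _ (hv 0) _ (hv 1) _ (hv 2) _ _)
  obtain ⟨t, hts, htn, b', hb'C, hb'⟩ :=
    isRamseyBound_ramseyBound _ 3 n χ' s hχ'C (by rwa [Finset.card_map])
  obtain ⟨b, hbC, rfl⟩ := Finset.mem_map.1 hb'C
  refine ⟨t, hts, htn, b, hbC, fun x hx y hy z hz hxy hyz => Option.some_injective _ ?_⟩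
  rw [← hχ' hxy hyz]
  exact hb' _ (by simp [Finset.insert_subset_iff, hx, hy, hz])
    (Finset.card_eq_three_of_lt hxy hyz)

end Triples

instance : Fintype XYZ :=
  ⟨{.x, .y, .z}, fun a => by cases a <;> simp⟩

def nonemptyWordsOfLengthLE (α : Type*) [Finite α] [DecidableEq α] (L : ℕ) : Finset (List α) :=
  (List.finite_length_le α L).toFinset.erase []

lemma mem_nonemptyWordsOfLengthLE {α : Type*} [Finite α] [DecidableEq α] {L : ℕ} {w : List α} :
    w ∈ nonemptyWordsOfLengthLE α L ↔ w ≠ [] ∧ w.length ≤ L := by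
  simp [nonemptyWordsOfLengthLE]

namespace PathSystem

variable {m : ℕ} (S : PathSystem m)

lemma leftEnd_injective : Function.Injective fun i => S.f i 0 :=
  fun i j h => by_contra fun hij => S.endpoints0 i j hij h

lemma length_signature3 {i j l : Fin m} (h1 : S.f i 0 < S.f j 0) (h2 : S.f j 0 < S.f l 0) :
    (signature3 S i j l h1 h2).length = (meetSet S i j ∪ meetSet S i l ∪ meetSet S j l).ncard := by
  rw [signature3, List.length_map, Finset.length_sort, ← Set.ncard_coe_finset]
  simp only [Finset.coe_union, Set.Finite.coe_toFinset]
  rfl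

end PathSystem

theorem KCrossing.signature3_mem {m k : ℕ} {S : PathSystem m} (hK : KCrossing S k) {i j l : Fin m}
    (h1 : S.f i 0 < S.f j 0) (h2 : S.f j 0 < S.f l 0) :
    signature3 S i j l h1 h2 ∈ nonemptyWordsOfLengthLE XYZ (3 * k) := by
  have hij : i ≠ j := ne_of_apply_ne (S.f · 0) h1.ne
  have hil : i ≠ l := ne_of_apply_ne (S.f · 0) (h1.trans h2).ne
  have hjl : j ≠ l := ne_of_apply_ne (S.f · 0) h2.ne
  have hfin : (meetSet S i j ∪ meetSet S i l ∪ meetSet S j l).Finite :=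
    ((S.finite_meet i j hij).union (S.finite_meet i l hil)).union (S.finite_meet j l hjl)
  rw [mem_nonemptyWordsOfLengthLE, ← List.length_pos_iff, S.length_signature3]
  constructor
  · calc 0 < (meetSet S i j).ncard := (hK i j hij).1
      _ ≤ _ := Set.ncard_le_ncard (Set.subset_union_left.trans Set.subset_union_left) hfin
  · calc _ ≤ (meetSet S i j ∪ meetSet S i l).ncard + (meetSet S j l).ncard := Set.ncard_union_le _ _
      _ ≤ (meetSet S i j).ncard + (meetSet S i l).ncard + (meetSet S j l).ncard := by
        gcongr; exact Set.ncard_union_le _ _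
      _ ≤ 3 * k := by linarith [(hK i j hij).2, (hK i l hil).2, (hK j l hjl).2]

theorem exists_regular_subsystem_general (k n : ℕ) :
    ∃ N : ℕ, 0 < N ∧ ∀ (m : ℕ) (S : PathSystem m), N ≤ m → KCrossing S k →
      ∃ s : Finset (Fin m), s.card = n ∧
        ∃ σ : List XYZ, σ ≠ [] ∧
          ∀ i j l : Fin m, i ∈ s → j ∈ s → l ∈ s →
            ∀ (h1 : S.f i 0 < S.f j 0) (h2 : S.f j 0 < S.f l 0),
              signature3 S i j l h1 h2 = σ := by
  refine ⟨ramseyBound (nonemptyWordsOfLengthLE XYZ (3 * k)).card 3 n + 1, Nat.succ_pos _,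
    fun m S hm hK => ?_⟩
  -- Order the paths by their left endpoints: the increasing triples are then exactly the
  -- triples that have a signature.
  let _ : LinearOrder (Fin m) := LinearOrder.lift' _ S.leftEnd_injective
  obtain ⟨s, -, hsn, σ, hσ, hs⟩ :=
    exists_homogeneous_triples_of_ramseyBound_le n (χ := signature3 S) (s := Finset.univ)
      (fun i _ j _ l _ h1 h2 => hK.signature3_mem h1 h2)
      (by rw [Finset.card_univ, Fintype.card_fin]; omega)
  exact ⟨s, hsn, σ, (mem_nonemptyWordsOfLengthLE.1 hσ).1,
    fun i j l hi hj hl h1 h2 => hs i hi j hj l hl h1 h2⟩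

/-- **Theorem (existence of large regular subsystems).** For `k ≥ 1` and `n ≥ 4`
there is a positive integer `N` such that every `k`-crossing system of size at least
`N` contains a regular subsystem of size `n` (all size-3 subsystems of the subsystem
have the same nonempty signature). -/
theorem exists_regular_subsystem (k n : ℕ) (hk : 1 ≤ k) (hn : 4 ≤ n) :
    ∃ N : ℕ, 0 < N ∧ ∀ (m : ℕ) (S : PathSystem m), N ≤ m → KCrossing S k →
      ∃ s : Finset (Fin m), s.card = n ∧
        ∃ σ : List XYZ, σ ≠ [] ∧
          ∀ i j l : Fin m, i ∈ s → j ∈ s → l ∈ s →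
            ∀ (h1 : S.f i 0 < S.f j 0) (h2 : S.f j 0 < S.f l 0),
              signature3 S i j l h1 h2 = σ :=
  exists_regular_subsystem_general k n

end
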